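/- arXiv:1903.04099 — 6 statements merged into one kernel-verified Lean document; each statement's English description precedes it below -/
import Mathlib

section
/- Let L be a nonnegative self-adjoint linear operator on a real inner product space H, M > 0, ε > 0, and suppose φ : [0,T] → H, μ : [0,T] → H, r : [0,T] → ℝ satisfy φ′ = −M L μ, μ = ε² L φ + (r/√(E₁(φ)+C₀)) F′(φ), and r′ = (1/(2√(E₁(φ)+C₀))) (F′(φ), φ′). Then (d/dt)[ (ε²/2)(Lφ, φ) + r² ] = −M (Lμ, μ) ≤ 0, i.e. the modified energy is non-increasing. -/
open scoped RealInnerProductSpace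

/-! The scalar auxiliary variable is built so that `d/dt r² = (r/√e) ⟪F'(φ), φ'⟫`, hence the
modified energy has derivative `⟪μ, φ'⟫` whenever `μ = ε² L φ + (r/√e) F'(φ)`. Along the
gradient flow `φ' = -M L μ` this is `-M ⟪L μ, μ⟫ ≤ 0`. -/

section

variable {H : Type*} [NormedAddCommGroup H] [InnerProductSpace ℝ H]

theorem HasDerivAt.inner_map_self {L : H →L[ℝ] H} (hL : (L : H →ₗ[ℝ] H).IsSymmetric)
    {φ : ℝ → H} {φ' : H} {t : ℝ} (hφ : HasDerivAt φ φ' t) :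
    HasDerivAt (fun s => ⟪L (φ s), φ s⟫) (2 * ⟪L (φ t), φ'⟫) t := by
  refine ((L.hasFDerivAt.comp_hasDerivAt t hφ).inner ℝ hφ).congr_deriv ?_
  have hsymm : ⟪L φ', φ t⟫ = ⟪L (φ t), φ'⟫ := by
    rw [real_inner_comm]
    exact (hL (φ t) φ').symm
  rw [Function.comp_apply, hsymm]
  ring

/-- Here `s` stands for `√(E₁(φ) + C₀)`; the key cancellation `2 r · 1/(2s) = r/s` is valid even
at `s = 0`, where both sides are `0` by the convention `x / 0 = 0`. -/
theorem hasDerivAt_modifiedEnergy {L : H →L[ℝ] H} (hL : (L : H →ₗ[ℝ] H).IsSymmetric) (ε s : ℝ)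
    {φ f : ℝ → H} {r : ℝ → ℝ} {φ' : H} {t : ℝ} (hφ : HasDerivAt φ φ' t)
    (hr : HasDerivAt r (1 / (2 * s) * ⟪f t, φ'⟫) t) :
    HasDerivAt (fun τ => ε ^ 2 / 2 * ⟪L (φ τ), φ τ⟫ + r τ ^ 2)
      ⟪ε ^ 2 • L (φ t) + (r t / s) • f t, φ'⟫ t := by
  refine (((hφ.inner_map_self hL).const_mul (ε ^ 2 / 2)).add (hr.pow 2)).congr_deriv ?_
  rw [inner_add_left, real_inner_smul_left, real_inner_smul_left]
  push_cast
  ring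

end

theorem sav_modified_energy_dissipation_general
    {H : Type*} [NormedAddCommGroup H] [InnerProductSpace ℝ H]
    (L : H →L[ℝ] H)
    (hLsa : ∀ u v : H, ⟪L u, v⟫ = ⟪u, L v⟫)
    (hLpos : ∀ u : H, 0 ≤ ⟪L u, u⟫)
    (M ε : ℝ) (hM : 0 < M)
    (φ μ f : ℝ → H) (r e : ℝ → ℝ)
    (hφ : ∀ t, HasDerivAt φ (-(M • L (μ t))) t)
    (hμ : ∀ t, μ t = (ε ^ 2) • L (φ t) + (r t / Real.sqrt (e t)) • f t)
    (hr : ∀ t, HasDerivAt r ((1 / (2 * Real.sqrt (e t))) * ⟪f t, -(M • L (μ t))⟫) t)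
    (t : ℝ) :
    HasDerivAt (fun s => ε ^ 2 / 2 * ⟪L (φ s), φ s⟫ + (r s) ^ 2)
        (-(M * ⟪L (μ t), μ t⟫)) t ∧
      -(M * ⟪L (μ t), μ t⟫) ≤ 0 := by
  have hdissipation : ⟪μ t, -(M • L (μ t))⟫ = -(M * ⟪L (μ t), μ t⟫) := by
    rw [inner_neg_right, real_inner_smul_right, real_inner_comm]
  refine ⟨?_, neg_nonpos.mpr (mul_nonneg hM.le (hLpos (μ t)))⟩
  have henergy := hasDerivAt_modifiedEnergy hLsa ε _ (hφ t) (hr t)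
  rwa [← hμ t, hdissipation] at henergy

/-- continuous-in-time modified energy dissipation law for the SAV system:
if `φ' = -M L μ`, `μ = ε² L φ + (r/√(E₁(φ)+C₀)) F'(φ)` and
`r' = (1/(2√(E₁(φ)+C₀))) (F'(φ), φ')`, then
`(d/dt)[(ε²/2)(Lφ,φ) + r²] = -M (Lμ, μ) ≤ 0`.
Here `e t` stands for `E₁(φ t) + C₀ > 0` and `f t` for `F'(φ t)`. -/
theorem sav_modified_energy_dissipation
    {H : Type*} [NormedAddCommGroup H] [InnerProductSpace ℝ H]
    (L : H →L[ℝ] H)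
    (hLsa : ∀ u v : H, ⟪L u, v⟫ = ⟪u, L v⟫)
    (hLpos : ∀ u : H, 0 ≤ ⟪L u, u⟫)
    (M ε : ℝ) (hM : 0 < M) (hε : 0 < ε)
    (φ μ f : ℝ → H) (r e : ℝ → ℝ)
    (he : ∀ t, 0 < e t)
    (hφ : ∀ t, HasDerivAt φ (-(M • L (μ t))) t)
    (hμ : ∀ t, μ t = (ε ^ 2) • L (φ t) + (r t / Real.sqrt (e t)) • f t)
    (hr : ∀ t, HasDerivAt r ((1 / (2 * Real.sqrt (e t))) * ⟪f t, -(M • L (μ t))⟫) t)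
    (t : ℝ) :
    HasDerivAt (fun s => ε ^ 2 / 2 * ⟪L (φ s), φ s⟫ + (r s) ^ 2)
        (-(M * ⟪L (μ t), μ t⟫)) t ∧
      -(M * ⟪L (μ t), μ t⟫) ≤ 0 :=
  sav_modified_energy_dissipation_general L hLsa hLpos M ε hM φ μ f r e hφ hμ hr t
end

section
/- Let H be a real inner product space and L : H → H a nonnegative self-adjoint linear operator. Let M, Δt, ε > 0, b ∈ H and fix a, r^n, φ^n, φ^{n+1}, μ^{n+1}, r^{n+1} with: (φ^{n+1} − φ^n)/Δt = −M L μ^{n+1}, μ^{n+1} = ε² L φ^{n+1} + a·r^{n+1} b (a = 1/√(E₁+C₀) > 0), and (r^{n+1} − r^n)/Δt = (a/2)(b, (φ^{n+1} − φ^n)/Δt). Then (ε²/2)(Lφ^{n+1}, φ^{n+1}) + |r^{n+1}|² ≤ (ε²/2)(Lφ^n, φ^n) + |r^n|², i.e. the first-order SAV scheme is unconditionally energy stable. -/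
open scoped RealInnerProductSpace

/-- unconditional energy stability of the first-order SAV scheme.
Here `b` plays the role of `F'(φ̃ⁿ⁺¹)` and `a = 1/√(E₁+C₀) > 0`. -/
theorem sav_first_order_energy_stable
    {H : Type*} [NormedAddCommGroup H] [InnerProductSpace ℝ H]
    (L : H →L[ℝ] H)
    (hLsa : ∀ u v : H, ⟪L u, v⟫ = ⟪u, L v⟫)
    (hLpos : ∀ u : H, 0 ≤ ⟪L u, u⟫)
    (M Δt ε a : ℝ) (hM : 0 < M) (hΔt : 0 < Δt) (hε : 0 < ε) (ha : 0 < a)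
    (b φn φn1 μ : H) (rn rn1 : ℝ)
    (h1 : (Δt)⁻¹ • (φn1 - φn) = -(M • L μ))
    (h2 : μ = (ε ^ 2) • L φn1 + (a * rn1) • b)
    (h3 : (rn1 - rn) / Δt = a / 2 * ⟪b, (Δt)⁻¹ • (φn1 - φn)⟫) :
    ε ^ 2 / 2 * ⟪L φn1, φn1⟫ + rn1 ^ 2 ≤ ε ^ 2 / 2 * ⟪L φn, φn⟫ + rn ^ 2 := by
  set d := φn1 - φn with hdset
  have hd : d = (-(Δt * M)) • L μ := by
    have h := congrArg (fun x : H => Δt • x) h1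
    simp only [smul_smul, mul_inv_cancel₀ hΔt.ne', one_smul, smul_neg] at h
    rw [neg_smul]; exact h
  have hdμ : ⟪d, μ⟫ ≤ 0 := by
    rw [hd, real_inner_smul_left]
    nlinarith [hLpos μ, mul_pos hΔt hM]
  have hr : rn1 - rn = a / 2 * ⟪b, d⟫ := by
    rw [real_inner_smul_right] at h3
    have h3' : (rn1 - rn) / Δt * Δt = a / 2 * (Δt⁻¹ * ⟪b, d⟫) * Δt := by rw [h3]
    rw [div_mul_cancel₀ _ hΔt.ne'] at h3'
    rw [h3']; field_simp
  have hexp : ⟪d, μ⟫ = ε ^ 2 * ⟪d, L φn1⟫ + (a * rn1) * ⟪d, b⟫ := by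
    rw [h2, inner_add_right, real_inner_smul_right, real_inner_smul_right]
  have e1 : ⟪L d, d⟫ = ⟪L φn1, φn1⟫ - ⟪L φn1, φn⟫ - ⟪L φn, φn1⟫ + ⟪L φn, φn⟫ := by
    simp only [hdset, map_sub, inner_sub_left, inner_sub_right]; ring
  have e2 : ⟪d, L φn1⟫ = ⟪φn1, L φn1⟫ - ⟪φn, L φn1⟫ := by
    simp only [hdset, inner_sub_left]
  have s1 : ⟪φn1, L φn1⟫ = ⟪L φn1, φn1⟫ := (hLsa φn1 φn1).symm
  have s2 : ⟪φn, L φn1⟫ = ⟪L φn, φn1⟫ := (hLsa φn φn1).symm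
  have s3 : ⟪L φn1, φn⟫ = ⟪L φn, φn1⟫ := by
    rw [hLsa φn1 φn, real_inner_comm]
  have hcomm : ⟪d, b⟫ = ⟪b, d⟫ := real_inner_comm b d
  have hpd : 0 ≤ ⟪L d, d⟫ := hLpos d
  have key1 : (a * rn1) * ⟪d, b⟫ = rn1 ^ 2 - rn ^ 2 + (rn1 - rn) ^ 2 := by
    rw [hcomm]; linear_combination (-2 * rn1) * hr
  have key2 : 2 * ⟪d, L φn1⟫ = ⟪L φn1, φn1⟫ - ⟪L φn, φn⟫ + ⟪L d, d⟫ := by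
    linarith
  have key3 : ε ^ 2 * ⟪d, L φn1⟫
      = ε ^ 2 / 2 * (⟪L φn1, φn1⟫ - ⟪L φn, φn⟫ + ⟪L d, d⟫) := by
    linear_combination (ε ^ 2 / 2) * key2
  have hL2 : 0 ≤ ε ^ 2 / 2 * ⟪L d, d⟫ :=
    mul_nonneg (by positivity) hpd
  nlinarith [sq_nonneg (rn1 - rn)]
end

section
/- Let H be a real inner product space and L : H → H a nonnegative self-adjoint linear operator. Let M, Δt, ε > 0, b ∈ H, a > 0, and suppose φ^{n−1}, φ^n, φ^{n+1} ∈ H and r^{n−1}, r^n, r^{n+1} ∈ ℝ satisfy the second-order BDF-SAV scheme: (3φ^{n+1} − 4φ^n + φ^{n−1})/(2Δt) = −M L μ^{n+1}, μ^{n+1} = ε² L φ^{n+1} + a r^{n+1} b, (3r^{n+1} − 4r^n + r^{n−1})/(2Δt) = (a/2)(b, (3φ^{n+1} − 4φ^n + φ^{n−1})/(2Δt)). Then (ε²/2)(Lφ^{n+1}, φ^{n+1}) + (ε²/2)(L(2φ^{n+1} − φ^n), 2φ^{n+1} − φ^n) + |r^{n+1}|² + |2r^{n+1} − r^n|² ≤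 (ε²/2)(Lφ^n, φ^n) + (ε²/2)(L(2φ^n − φ^{n−1}), 2φ^n − φ^{n−1}) + |r^n|² + |2r^n − r^{n−1}|². -/
open scoped RealInnerProductSpace

/-!
Write `g = 3φⁿ⁺¹ - 4φⁿ + φⁿ⁻¹`. Pairing the first equation with `μ` gives `⟪g, μ⟫ ≤ 0`, since `L`
is nonnegative; the third equation rewrites the nonlocal part `a rⁿ⁺¹ ⟪g, b⟫` of `⟪g, μ⟫` as
`2 rⁿ⁺¹ (3rⁿ⁺¹ - 4rⁿ + rⁿ⁻¹)`. For any symmetric bilinear form `B`, `2 B(x, 3x - 4y + z)` is the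
increment of the BDF2 energy `B(x, x) + B(2x - y, 2x - y)` plus `B(x - 2y + z, x - 2y + z)`;
applied to `⟪L ·, ·⟫` and to multiplication on `ℝ`, it bounds the energy increment by `⟪g, μ⟫`.
-/

theorem LinearMap.BilinForm.IsSymm.two_mul_apply_bdf2 {R V : Type*} [CommRing R] [AddCommGroup V]
    [Module R V] {B : LinearMap.BilinForm R V} (hB : B.IsSymm) (x y z : V) :
    2 * B x ((3 : R) • x - (4 : R) • y + z) =
      B x x + B ((2 : R) • x - y) ((2 : R) • x - y) - B y y -
        B ((2 : R) • y - z) ((2 : R) • y - z) + B (x - (2 : R) • y + z) (x - (2 : R) • y + z) := by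
  simp only [map_add, map_sub, map_smul, LinearMap.add_apply, LinearMap.sub_apply,
    LinearMap.smul_apply, smul_eq_mul, hB.eq y x, hB.eq z x, hB.eq z y]
  ring

theorem inner_nonpos_of_smul_eq_neg_smul_apply {H : Type*} [NormedAddCommGroup H]
    [InnerProductSpace ℝ H] {L : H →L[ℝ] H} {c M : ℝ} {g μ : H} (hc : 0 < c) (hM : 0 ≤ M)
    (hLμ : 0 ≤ ⟪L μ, μ⟫) (h : c • g = -(M • L μ)) : ⟪g, μ⟫ ≤ 0 := by
  have hcg : c * ⟪g, μ⟫ = -(M * ⟪L μ, μ⟫) := by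
    rw [← real_inner_smul_left, h, inner_neg_left, real_inner_smul_left]
  exact nonpos_of_mul_nonpos_right (hcg ▸ neg_nonpos.2 (mul_nonneg hM hLμ)) hc

theorem sav_bdf2_energy_stable_general
    {H : Type*} [NormedAddCommGroup H] [InnerProductSpace ℝ H]
    (L : H →L[ℝ] H)
    (hLsa : ∀ u v : H, ⟪L u, v⟫ = ⟪u, L v⟫)
    (hLpos : ∀ u : H, 0 ≤ ⟪L u, u⟫)
    (M Δt ε a : ℝ) (hM : 0 < M) (hΔt : 0 < Δt)
    (b φnm1 φn φn1 μ : H) (rnm1 rn rn1 : ℝ)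
    (h1 : (1 / (2 * Δt)) • ((3 : ℝ) • φn1 - (4 : ℝ) • φn + φnm1) = -(M • L μ))
    (h2 : μ = (ε ^ 2) • L φn1 + (a * rn1) • b)
    (h3 : (3 * rn1 - 4 * rn + rnm1) / (2 * Δt) =
      a / 2 * ⟪b, (1 / (2 * Δt)) • ((3 : ℝ) • φn1 - (4 : ℝ) • φn + φnm1)⟫) :
    ε ^ 2 / 2 * ⟪L φn1, φn1⟫ +
        ε ^ 2 / 2 * ⟪L ((2 : ℝ) • φn1 - φn), (2 : ℝ) • φn1 - φn⟫ +
        rn1 ^ 2 + (2 * rn1 - rn) ^ 2 ≤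
      ε ^ 2 / 2 * ⟪L φn, φn⟫ +
        ε ^ 2 / 2 * ⟪L ((2 : ℝ) • φn - φnm1), (2 : ℝ) • φn - φnm1⟫ +
        rn ^ 2 + (2 * rn - rnm1) ^ 2 := by
  set g : H := (3 : ℝ) • φn1 - (4 : ℝ) • φn + φnm1
  have hgμ : ⟪g, μ⟫ ≤ 0 :=
    inner_nonpos_of_smul_eq_neg_smul_apply (by positivity) hM.le (hLpos μ) h1
  have hbg : 3 * rn1 - 4 * rn + rnm1 = a / 2 * ⟪b, g⟫ := by
    rw [real_inner_smul_right] at h3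
    field_simp at h3
    linarith
  have hμ : ⟪g, μ⟫ = ε ^ 2 * ⟪L φn1, g⟫ + 2 * rn1 * (3 * rn1 - 4 * rn + rnm1) := by
    rw [h2, hbg, inner_add_right, real_inner_smul_right, real_inner_smul_right,
      real_inner_comm (L φn1), real_inner_comm b]
    ring
  have hLsymm : LinearMap.BilinForm.IsSymm ((innerₗ H).comp L.toLinearMap) :=
    ⟨fun u v => (hLsa u v).trans (real_inner_comm _ _)⟩
  have hφ_bdf2 := hLsymm.two_mul_apply_bdf2 φn1 φn φnm1
  have hmul : LinearMap.BilinForm.IsSymm (LinearMap.mul ℝ ℝ) := ⟨mul_comm⟩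
  have hr_bdf2 := hmul.two_mul_apply_bdf2 rn1 rn rnm1
  simp only [LinearMap.comp_apply, innerₗ_apply_apply, ContinuousLinearMap.coe_coe,
    LinearMap.mul_apply', smul_eq_mul] at hφ_bdf2 hr_bdf2
  linear_combination hgμ - (ε ^ 2 / 2) * hφ_bdf2 - hr_bdf2 - hμ +
    mul_nonneg (sq_nonneg ε) (hLpos (φn1 - (2 : ℝ) • φn + φnm1)) / 2 +
    sq_nonneg (rn1 - 2 * rn + rnm1)

/-- unconditional energy stability of the second-order BDF-SAV scheme.
Here `b` plays the role of `F'(φ̃ⁿ⁺¹ᐟ²)` and `a = 1/√(E₁+C₀) > 0`. -/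
theorem sav_bdf2_energy_stable
    {H : Type*} [NormedAddCommGroup H] [InnerProductSpace ℝ H]
    (L : H →L[ℝ] H)
    (hLsa : ∀ u v : H, ⟪L u, v⟫ = ⟪u, L v⟫)
    (hLpos : ∀ u : H, 0 ≤ ⟪L u, u⟫)
    (M Δt ε a : ℝ) (hM : 0 < M) (hΔt : 0 < Δt) (hε : 0 < ε) (ha : 0 < a)
    (b φnm1 φn φn1 μ : H) (rnm1 rn rn1 : ℝ)
    (h1 : (1 / (2 * Δt)) • ((3 : ℝ) • φn1 - (4 : ℝ) • φn + φnm1) = -(M • L μ))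
    (h2 : μ = (ε ^ 2) • L φn1 + (a * rn1) • b)
    (h3 : (3 * rn1 - 4 * rn + rnm1) / (2 * Δt) =
      a / 2 * ⟪b, (1 / (2 * Δt)) • ((3 : ℝ) • φn1 - (4 : ℝ) • φn + φnm1)⟫) :
    ε ^ 2 / 2 * ⟪L φn1, φn1⟫ +
        ε ^ 2 / 2 * ⟪L ((2 : ℝ) • φn1 - φn), (2 : ℝ) • φn1 - φn⟫ +
        rn1 ^ 2 + (2 * rn1 - rn) ^ 2 ≤
      ε ^ 2 / 2 * ⟪L φn, φn⟫ +
        ε ^ 2 / 2 * ⟪L ((2 : ℝ) • φn - φnm1), (2 : ℝ) • φn - φnm1⟫ +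
        rn ^ 2 + (2 * rn - rnm1) ^ 2 :=
  sav_bdf2_energy_stable_general L hLsa hLpos M Δt ε a hM hΔt b φnm1 φn φn1 μ rnm1 rn rn1 h1 h2 h3
end

section
/- Let B be symmetric positive semidefinite, A = I + cB² with c > 0, and η ∈ ℝᴺ. Then for any λ ∈ ℝ with λ ≥ 0, the matrix equation (A + λ B η ηᵀ)-type SAV linear system has a unique solution. Precisely: given the scalar equation (1 + (1/6)MΔt θ) s = g where θ = (A⁻¹ B η, η) ≥ 0, M, Δt > 0 and g ∈ ℝ, there is a unique s, and consequently the fully discrete SAV scheme A Φ^{n+1} + (1/6)MΔt (η, Φ^{n+1}) B η = RHS has a unique solution Φ^{n+1} ∈ ℝᴺ for any given right-hand side RHS ∈ ℝᴺ. -/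
/-!
`A = 1 + c B²` is positive definite, and `A⁻¹ B = A⁻¹ (A B) A⁻¹` is a congruence of
`A B = B + c B³ ⪰ 0`, so `θ = ηᵀ A⁻¹ B η ≥ 0` and `1 + (MΔt/6) θ > 0`. The SAV system is the
rank-one perturbation `A + (MΔt/6) (Bη) ηᵀ`, whose determinant is `det A · (1 + (MΔt/6) θ) ≠ 0`
by the matrix determinant lemma.
-/

open Matrix
open scoped ComplexOrder

namespace Matrix

variable {n : Type*} [Fintype n] [DecidableEq n]

theorem PosSemidef.inv_mul_of_commute {R : Type*} [CommRing R] [PartialOrder R] [StarRing R]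
    {A B : Matrix n n R} (hA : A.IsHermitian) (hAB : Commute A B) (h : (A * B).PosSemidef) :
    (A⁻¹ * B).PosSemidef := by
  by_cases hdet : IsUnit A.det
  · have hconj : A⁻¹ * B = (A⁻¹)ᴴ * (A * B) * A⁻¹ := by
      calc A⁻¹ * B = A⁻¹ * (B * A) * A⁻¹ := by
            rw [Matrix.mul_assoc, Matrix.mul_assoc, mul_nonsing_inv A hdet, Matrix.mul_one]
        _ = (A⁻¹)ᴴ * (A * B) * A⁻¹ := by rw [hA.inv.eq, hAB.eq]
    rw [hconj]
    exact h.conjTranspose_mul_mul_same _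
  · -- a singular `A` has `A⁻¹ = 0` by convention
    rw [nonsing_inv_apply_not_isUnit A hdet, Matrix.zero_mul]
    exact .zero

variable {𝕜 : Type*} [RCLike 𝕜] {B : Matrix n n 𝕜} {c : ℝ}

theorem IsHermitian.posDef_one_add_smul_mul_self (hB : B.IsHermitian) (hc : 0 ≤ c) :
    (1 + c • (B * B)).PosDef := by
  have hBB : (B * B).PosSemidef := by
    simpa only [hB.eq] using posSemidef_conjTranspose_mul_self B
  exact PosDef.one.add_posSemidef (hBB.smul hc)

theorem PosSemidef.one_add_smul_mul_self_mul (hB : B.PosSemidef) (hc : 0 ≤ c) :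
    ((1 + c • (B * B)) * B).PosSemidef := by
  have hBBB : (B * B * B).PosSemidef := by
    simpa only [hB.isHermitian.eq] using hB.conjTranspose_mul_mul_same B
  simpa only [Matrix.add_mul, Matrix.one_mul, Matrix.smul_mul] using hB.add (hBBB.smul hc)

theorem PosSemidef.inv_one_add_smul_mul_self_mul (hB : B.PosSemidef) (hc : 0 ≤ c) :
    ((1 + c • (B * B))⁻¹ * B).PosSemidef :=
  have hcomm : Commute (1 + c • (B * B)) B :=
    (Commute.one_left B).add_left (((Commute.refl B).mul_left (Commute.refl B)).smul_left c)
  inv_mul_of_commute (hB.isHermitian.posDef_one_add_smul_mul_self hc).isHermitian hcomm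
    (hB.one_add_smul_mul_self_mul hc)

theorem existsUnique_mulVec_add_smul_dotProduct_eq {K : Type*} [Field K] {A : Matrix n n K}
    (hA : IsUnit A.det) (k : K) (u v b : n → K) (h : 1 + k * (v ⬝ᵥ (A⁻¹ *ᵥ u)) ≠ 0) :
    ∃! x, A *ᵥ x + (k * (v ⬝ᵥ x)) • u = b := by
  set w := k • (A⁻¹ *ᵥ u)
  set C := A * (1 + replicateCol Unit w * replicateRow Unit v)
  have hC : ∀ x, C *ᵥ x = A *ᵥ x + (k * (v ⬝ᵥ x)) • u := by
    intro x
    rw [← mulVec_mulVec, add_mulVec, one_mulVec, ← vecMulVec_eq, vecMulVec_mulVec, op_smul_eq_smul,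
      mulVec_add, mulVec_smul, mulVec_smul, mulVec_mulVec, mul_nonsing_inv A hA, one_mulVec,
      smul_smul, mul_comm]
  have hCu : IsUnit C := by
    rw [isUnit_iff_isUnit_det, det_mul, det_one_add_replicateCol_mul_replicateRow, dotProduct_smul,
      smul_eq_mul]
    exact hA.mul h.isUnit
  simp_rw [← hC]
  exact (Function.Bijective.existsUnique
    ⟨mulVec_injective_iff_isUnit.mpr hCu, mulVec_surjective_iff_isUnit.mpr hCu⟩ b)

end Matrix

theorem sav_scheme_unique_solvability_general
    (N : ℕ) (B : Matrix (Fin N) (Fin N) ℝ) (hB : B.PosSemidef)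
    (M Δt ε : ℝ) (hM : 0 < M) (hΔt : 0 < Δt)
    (A : Matrix (Fin N) (Fin N) ℝ)
    (hA : A = 1 + (2 / 3 * M * Δt * ε ^ 2) • (B * B))
    (η RHS : Fin N → ℝ) (g : ℝ) :
    (∃! s : ℝ, (1 + 1 / 6 * M * Δt * (η ⬝ᵥ (A⁻¹ *ᵥ (B *ᵥ η)))) * s = g) ∧
      ∃! Φ : Fin N → ℝ, A *ᵥ Φ + (1 / 6 * M * Δt * (η ⬝ᵥ Φ)) • (B *ᵥ η) = RHS := by
  have hc : 0 ≤ 2 / 3 * M * Δt * ε ^ 2 := by positivity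
  have hAdet : IsUnit A.det :=
    (isUnit_iff_isUnit_det A).mp (hA ▸ (hB.isHermitian.posDef_one_add_smul_mul_self hc).isUnit)
  have hθ : 0 ≤ η ⬝ᵥ (A⁻¹ *ᵥ (B *ᵥ η)) := by
    simpa only [hA, star_trivial, mulVec_mulVec] using
      (hB.inv_one_add_smul_mul_self_mul hc).dotProduct_mulVec_nonneg η
  have hcoef : 1 + 1 / 6 * M * Δt * (η ⬝ᵥ (A⁻¹ *ᵥ (B *ᵥ η))) ≠ 0 := by positivity
  exact ⟨(Equiv.mulLeft₀ _ hcoef).bijective.existsUnique g,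
    existsUnique_mulVec_add_smul_dotProduct_eq hAdet _ _ _ _ hcoef⟩

/-- unique solvability of the fully discrete SAV scheme.
With `A = I + (2/3)MΔtε² B²` (`B` symmetric PSD) the auxiliary scalar equation
`(1 + (1/6)MΔt θ) s = g`, `θ = (A⁻¹Bη, η)`, has a unique solution, and the linear
system `A Φ + (1/6)MΔt (η, Φ) Bη = RHS` has a unique solution `Φ`. -/
theorem sav_scheme_unique_solvability
    (N : ℕ) (B : Matrix (Fin N) (Fin N) ℝ) (hB : B.PosSemidef)
    (M Δt ε : ℝ) (hM : 0 < M) (hΔt : 0 < Δt) (hε : 0 < ε)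
    (A : Matrix (Fin N) (Fin N) ℝ)
    (hA : A = 1 + (2 / 3 * M * Δt * ε ^ 2) • (B * B))
    (η RHS : Fin N → ℝ) (g : ℝ) :
    (∃! s : ℝ, (1 + 1 / 6 * M * Δt * (η ⬝ᵥ (A⁻¹ *ᵥ (B *ᵥ η)))) * s = g) ∧
      ∃! Φ : Fin N → ℝ, A *ᵥ Φ + (1 / 6 * M * Δt * (η ⬝ᵥ Φ)) • (B *ᵥ η) = RHS :=
  sav_scheme_unique_solvability_general N B hB M Δt ε hM hΔt A hA η RHS g
end

section
/- Let H be a real inner product space, L : H → H nonnegative self-adjoint, and suppose (φ, μ, r) solves the SAV-reformulated nonlocal Cahn–Hilliard system φ_t = −MLμ, μ = ε²Lφ + (r/√(E₁(φ)+C₀)) F′(φ), r_t = (1/(2√(E₁(φ)+C₀)))(F′(φ), φ_t), with the constraint r(0) = √(E₁(φ(0)) + C₀). Then r(t)² + (ε²/2)(Lφ(t), φ(t)) ≤ r(0)² + (ε²/2)(Lφ(0), φ(0)) for all t ≥ 0; in particular r(t)² and (Lφ(t), φ(t)) are uniformly bounded in time. -/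
/-!
The SAV variable `r` is built so that `2 r r' = (r / √(E₁ + C₀)) (F'(φ), φ')`, which is exactly
the nonlinear part of `(μ, φ')`. Hence the modified energy `r² + (ε²/2)(Lφ, φ)` has derivative
`(μ, φ') = -M (Lμ, μ) ≤ 0` and is nonincreasing in time.
-/

open scoped RealInnerProductSpace

section

variable {H : Type*} [NormedAddCommGroup H] [InnerProductSpace ℝ H]

theorem HasDerivAt.inner_apply_self_of_isSymmetric {L : H →L[ℝ] H}
    (hL : (L : H →ₗ[ℝ] H).IsSymmetric) {x : ℝ → H} {x' : H} {t : ℝ}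
    (hx : HasDerivAt x x' t) :
    HasDerivAt (fun s => ⟪L (x s), x s⟫) (2 * ⟪L (x t), x'⟫) t := by
  refine ((L.hasFDerivAt.comp_hasDerivAt t hx).inner ℝ hx).congr_deriv ?_
  rw [Function.comp_apply, show ⟪L x', x t⟫ = ⟪L (x t), x'⟫ from
    (hL x' (x t)).trans (real_inner_comm _ _)]
  ring

theorem hasDerivAt_sav_energy {L : H →L[ℝ] H} (hL : (L : H →ₗ[ℝ] H).IsSymmetric)
    (ε s : ℝ) {φ : ℝ → H} {r : ℝ → ℝ} {g φ' : H} {t : ℝ}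
    (hφ : HasDerivAt φ φ' t) (hr : HasDerivAt r (1 / (2 * s) * ⟪g, φ'⟫) t) :
    HasDerivAt (fun t => r t ^ 2 + ε ^ 2 / 2 * ⟪L (φ t), φ t⟫)
      ⟪ε ^ 2 • L (φ t) + (r t / s) • g, φ'⟫ t := by
  refine ((hr.pow 2).add ((hφ.inner_apply_self_of_isSymmetric hL).const_mul
    (ε ^ 2 / 2))).congr_deriv ?_
  rw [inner_add_left, real_inner_smul_left, real_inner_smul_left]
  -- `2 r / (2 s) = r / s` holds also for `s = 0`, where both sides are `0`.
  field_simp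
  ring

theorem inner_neg_smul_apply_self_nonpos {L : H →L[ℝ] H} (hL : ∀ u : H, 0 ≤ ⟪L u, u⟫)
    {M : ℝ} (hM : 0 ≤ M) (u : H) : ⟪u, -(M • L u)⟫ ≤ 0 := by
  rw [inner_neg_right, real_inner_smul_right, real_inner_comm]
  exact neg_nonpos.mpr (mul_nonneg hM (hL u))

end

theorem sav_uniform_bound_general
    {H : Type*} [NormedAddCommGroup H] [InnerProductSpace ℝ H]
    (L : H →L[ℝ] H)
    (hLsa : ∀ u v : H, ⟪L u, v⟫ = ⟪u, L v⟫)
    (hLpos : ∀ u : H, 0 ≤ ⟪L u, u⟫)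
    (M ε C0 : ℝ) (hM : 0 < M)
    (E1 : H → ℝ) (φ μ f : ℝ → H) (r : ℝ → ℝ)
    (hφ : ∀ t, HasDerivAt φ (-(M • L (μ t))) t)
    (hμ : ∀ t, μ t = (ε ^ 2) • L (φ t) +
      (r t / Real.sqrt (E1 (φ t) + C0)) • f t)
    (hr : ∀ t, HasDerivAt r
      ((1 / (2 * Real.sqrt (E1 (φ t) + C0))) * ⟪f t, -(M • L (μ t))⟫) t) :
    ∀ t : ℝ, 0 ≤ t →
      (r t) ^ 2 + ε ^ 2 / 2 * ⟪L (φ t), φ t⟫ ≤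
        (r 0) ^ 2 + ε ^ 2 / 2 * ⟪L (φ 0), φ 0⟫ := by
  have hdissipation : ∀ t, HasDerivAt (fun t => r t ^ 2 + ε ^ 2 / 2 * ⟪L (φ t), φ t⟫)
      ⟪μ t, -(M • L (μ t))⟫ t := fun t => by
    have h := hasDerivAt_sav_energy hLsa ε _ (hφ t) (hr t)
    rwa [← hμ t] at h
  have hanti := antitone_of_hasDerivAt_nonpos hdissipation
    fun t => inner_neg_smul_apply_self_nonpos hLpos hM.le (μ t)
  exact fun t ht => hanti ht

/-- uniform-in-time bound for the continuous SAV system.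
If `(φ, μ, r)` solves `φ' = -MLμ`, `μ = ε²Lφ + (r/√(E₁(φ)+C₀))F'(φ)`,
`r' = (1/(2√(E₁(φ)+C₀)))(F'(φ), φ')`, with `r 0 = √(E₁(φ 0)+C₀)`, then
`r(t)² + (ε²/2)(Lφ(t), φ(t)) ≤ r(0)² + (ε²/2)(Lφ(0), φ(0))` for all `t ≥ 0`.
Here `f t` stands for `F'(φ t)` and `E₁ : H → ℝ` for `φ ↦ ∫_Ω F(φ)`. -/
theorem sav_uniform_bound
    {H : Type*} [NormedAddCommGroup H] [InnerProductSpace ℝ H]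
    (L : H →L[ℝ] H)
    (hLsa : ∀ u v : H, ⟪L u, v⟫ = ⟪u, L v⟫)
    (hLpos : ∀ u : H, 0 ≤ ⟪L u, u⟫)
    (M ε C0 : ℝ) (hM : 0 < M) (hε : 0 < ε)
    (E1 : H → ℝ) (φ μ f : ℝ → H) (r : ℝ → ℝ)
    (hpos : ∀ t, 0 < E1 (φ t) + C0)
    (hφ : ∀ t, HasDerivAt φ (-(M • L (μ t))) t)
    (hμ : ∀ t, μ t = (ε ^ 2) • L (φ t) +
      (r t / Real.sqrt (E1 (φ t) + C0)) • f t)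
    (hr : ∀ t, HasDerivAt r
      ((1 / (2 * Real.sqrt (E1 (φ t) + C0))) * ⟪f t, -(M • L (μ t))⟫) t)
    (hr0 : r 0 = Real.sqrt (E1 (φ 0) + C0))
    (hcont : Continuous fun t => ⟪L (μ t), μ t⟫) :
    ∀ t : ℝ, 0 ≤ t →
      (r t) ^ 2 + ε ^ 2 / 2 * ⟪L (φ t), φ t⟫ ≤
        (r 0) ^ 2 + ε ^ 2 / 2 * ⟪L (φ 0), φ 0⟫ :=
  sav_uniform_bound_general L hLsa hLpos M ε C0 hM E1 φ μ f r hφ hμ hr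
end

section
/- Let A ∈ ℝᴺˣᴺ be symmetric positive definite and let u_k be the iterates of the conjugate gradient method applied to Au = f with initial guess u_0. Then the error in the A-norm satisfies ‖u_k − u‖_A ≤ 2 ((√κ − 1)/(√κ + 1))^k ‖u_0 − u‖_A, where κ = λ_max(A)/λ_min(A) is the spectral condition number of A. -/
/-!
The residuals of CG are mutually orthogonal and its search directions `A`-conjugate, so `r k` is
orthogonal to `span {r 0, …, r (k - 1)} = span {d 1, …, d k}`, a space that contains the Krylov
space `span {r 0, A r 0, …, A ^ (k - 1) r 0}`. For a polynomial `p` of degree `≤ k` with `p 0 = 1`,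
both `u k - u 0` and `p(A) e₀ - e₀` (where `e₀ = u 0 - xs`) lie in that space, while
`A (u k - xs) = -r k`. So `p(A) e₀ - (u k - xs)` is `A`-orthogonal to `u k - xs`, and
`‖u k - xs‖_A ≤ ‖p(A) e₀‖_A ≤ maxᵢ |p(λᵢ)| ‖e₀‖_A`. With `a = λ_min` and `b = λ_max`, the
polynomial `p(λ) = T_k((b + a - 2λ) / (b - a)) / T_k((b + a) / (b - a))` gives the factor
`2 ((√κ - 1) / (√κ + 1)) ^ k`, since `|T_k| ≤ 1` on `[-1, 1]` and
`T_k (cosh θ) = cosh (k θ) ≥ e^{kθ} / 2`, here with `e^θ = (√κ + 1) / (√κ - 1)`.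
Once a residual vanishes all later ones do, and the bound is trivial.
-/

open Matrix Polynomial Submodule

variable {ι R : Type*} [Fintype ι]

lemma dotProduct_eq_zero_of_mem_span [CommSemiring R] {S : Set (ι → R)} {v w : ι → R}
    (h : ∀ s ∈ S, v ⬝ᵥ s = 0) (hw : w ∈ span R S) : v ⬝ᵥ w = 0 :=
  (span_le (p := LinearMap.ker (dotProductBilin R R v)).mpr h) hw

namespace Matrix

lemma IsSymm.dotProduct_mulVec_comm [CommSemiring R] {A : Matrix ι ι R} (hA : A.IsSymm)
    (x y : ι → R) : x ⬝ᵥ (A *ᵥ y) = y ⬝ᵥ (A *ᵥ x) := by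
  rw [dotProduct_mulVec, ← mulVec_transpose, hA.eq, dotProduct_comm]

lemma dotProduct_mulVec_eq_zero_of_mem_span [CommSemiring R] {A : Matrix ι ι R}
    {S : Set (ι → R)} {v w : ι → R} (h : ∀ s ∈ S, v ⬝ᵥ (A *ᵥ s) = 0) (hw : w ∈ span R S) :
    v ⬝ᵥ (A *ᵥ w) = 0 := by
  rw [dotProduct_mulVec]
  exact dotProduct_eq_zero_of_mem_span (fun s hs => dotProduct_mulVec v A s ▸ h s hs) hw

lemma IsSymm.dotProduct_mulVec_of_mulVec_eq_smul [CommSemiring R] {A : Matrix ι ι R}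
    (hA : A.IsSymm) {v : ι → R} {μ : R} (hv : A *ᵥ v = μ • v) (x : ι → R) :
    v ⬝ᵥ (A *ᵥ x) = μ * (v ⬝ᵥ x) := by
  rw [hA.dotProduct_mulVec_comm, hv, dotProduct_smul, smul_eq_mul, dotProduct_comm]

lemma IsSymm.aeval [CommSemiring R] [DecidableEq ι] {A : Matrix ι ι R} (hA : A.IsSymm)
    (p : R[X]) : (aeval A p).IsSymm := by
  induction p using Polynomial.induction_on' with
  | add p q hp hq => rw [map_add]; exact hp.add hq
  | monomial k c => rw [aeval_monomial, ← Algebra.smul_def]; exact (hA.pow k).smul c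

lemma aeval_mulVec_of_mulVec_eq_smul [CommRing R] [DecidableEq ι] {A : Matrix ι ι R}
    {v : ι → R} {μ : R} (hv : A *ᵥ v = μ • v) (p : R[X]) :
    aeval A p *ᵥ v = p.eval μ • v := by
  have h := Module.End.aeval_apply_of_mem_apply_eq_smul (f := toLinAlgEquiv' A) (p := p) hv
  rwa [aeval_algHom_apply, toLinAlgEquiv'_apply] at h

lemma PosSemidef.dotProduct_mulVec_le_of_sub_dotProduct_mulVec_eq_zero {A : Matrix ι ι ℝ}
    (hA : A.PosSemidef) {x y : ι → ℝ} (h : (y - x) ⬝ᵥ (A *ᵥ x) = 0) :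
    x ⬝ᵥ (A *ᵥ x) ≤ y ⬝ᵥ (A *ᵥ y) := by
  have hsymm := (isHermitian_iff_isSymm.mp hA.1).dotProduct_mulVec_comm
  have hnonneg : 0 ≤ (y - x) ⬝ᵥ (A *ᵥ (y - x)) := by
    simpa using hA.dotProduct_mulVec_nonneg (y - x)
  rw [← add_sub_cancel x y, mulVec_add, dotProduct_add, add_dotProduct, add_dotProduct,
    hsymm x (y - x), h]
  linarith

namespace IsHermitian

variable [DecidableEq ι] {A : Matrix ι ι ℝ} (hA : A.IsHermitian)

lemma dotProduct_eq_sum_eigenvectorBasis (x y : ι → ℝ) :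
    x ⬝ᵥ y = ∑ i, (hA.eigenvectorBasis i ⬝ᵥ x) * (hA.eigenvectorBasis i ⬝ᵥ y) := by
  have h := hA.eigenvectorBasis.sum_inner_mul_inner (WithLp.toLp 2 x) (WithLp.toLp 2 y)
  simp only [EuclideanSpace.inner_eq_star_dotProduct, star_trivial] at h
  rw [dotProduct_comm x y, ← h]
  simp only [dotProduct_comm y]

lemma dotProduct_mulVec_eq_sum_eigenvalues (x : ι → ℝ) :
    x ⬝ᵥ (A *ᵥ x) = ∑ i, hA.eigenvalues i * (hA.eigenvectorBasis i ⬝ᵥ x) ^ 2 := by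
  rw [hA.dotProduct_eq_sum_eigenvectorBasis]
  refine Finset.sum_congr rfl fun i _ => ?_
  rw [(isHermitian_iff_isSymm.mp hA).dotProduct_mulVec_of_mulVec_eq_smul
    (hA.mulVec_eigenvectorBasis i)]
  ring

lemma eigenvectorBasis_dotProduct_aeval_mulVec (p : ℝ[X]) (i : ι) (x : ι → ℝ) :
    hA.eigenvectorBasis i ⬝ᵥ (aeval A p *ᵥ x) =
      p.eval (hA.eigenvalues i) * (hA.eigenvectorBasis i ⬝ᵥ x) :=
  ((isHermitian_iff_isSymm.mp hA).aeval p).dotProduct_mulVec_of_mulVec_eq_smul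
    (aeval_mulVec_of_mulVec_eq_smul (hA.mulVec_eigenvectorBasis i) p) x

end IsHermitian

lemma PosSemidef.dotProduct_mulVec_aeval_le [DecidableEq ι] {A : Matrix ι ι ℝ}
    (hA : A.PosSemidef) (p : ℝ[X]) {M : ℝ} (hM : ∀ i, |p.eval (hA.1.eigenvalues i)| ≤ M)
    (x : ι → ℝ) :
    (aeval A p *ᵥ x) ⬝ᵥ (A *ᵥ (aeval A p *ᵥ x)) ≤ M ^ 2 * (x ⬝ᵥ (A *ᵥ x)) := by
  simp only [hA.1.dotProduct_mulVec_eq_sum_eigenvalues,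
    hA.1.eigenvectorBasis_dotProduct_aeval_mulVec, Finset.mul_sum]
  refine Finset.sum_le_sum fun i _ => ?_
  have hp : p.eval (hA.1.eigenvalues i) ^ 2 ≤ M ^ 2 := sq_le_sq.mpr ((hM i).trans (le_abs_self M))
  calc hA.1.eigenvalues i * (p.eval (hA.1.eigenvalues i) * (hA.1.eigenvectorBasis i ⬝ᵥ x)) ^ 2
      = p.eval (hA.1.eigenvalues i) ^ 2 *
          (hA.1.eigenvalues i * (hA.1.eigenvectorBasis i ⬝ᵥ x) ^ 2) := by ring
    _ ≤ M ^ 2 * (hA.1.eigenvalues i * (hA.1.eigenvectorBasis i ⬝ᵥ x) ^ 2) :=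
        mul_le_mul_of_nonneg_right hp (mul_nonneg (hA.eigenvalues_nonneg i) (sq_nonneg _))

def krylov [CommRing R] [DecidableEq ι] (A : Matrix ι ι R) (v : ι → R) (k : ℕ) :
    Submodule R (ι → R) :=
  span R ((fun i => (A ^ i) *ᵥ v) '' Set.Iio k)

lemma aeval_mulVec_sub_mem_krylov [CommRing R] [DecidableEq ι] (A : Matrix ι ι R) {p : R[X]}
    {k : ℕ} (hdeg : p.natDegree ≤ k) (hp0 : p.eval 0 = 1) (x : ι → R) :
    aeval A p *ᵥ x - x ∈ A.krylov (A *ᵥ x) k := by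
  rw [aeval_eq_sum_range' (Nat.lt_succ_of_le hdeg), Finset.sum_range_succ',
    coeff_zero_eq_eval_zero, hp0, pow_zero, one_smul, add_mulVec, one_mulVec,
    add_sub_cancel_right, sum_mulVec]
  refine sum_mem fun i hi => ?_
  rw [smul_mulVec, pow_succ, ← mulVec_mulVec]
  exact smul_mem _ _ (subset_span ⟨i, Finset.mem_range.mp hi, rfl⟩)

end Matrix

lemma Polynomial.Chebyshev.exp_le_two_mul_eval_T_cosh (k : ℕ) (θ : ℝ) :
    Real.exp (k * θ) ≤ 2 * (T ℝ k).eval (Real.cosh θ) := by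
  rw [T_real_cosh, Real.cosh_eq]
  push_cast
  linarith [Real.exp_pos (-(k * θ))]

lemma Polynomial.Chebyshev.inv_eval_T_real_le {a b : ℝ} (ha : 0 < a) (hab : a < b) (k : ℕ) :
    ((Chebyshev.T ℝ k).eval ((b + a) / (b - a)))⁻¹ ≤
      2 * ((√(b / a) - 1) / (√(b / a) + 1)) ^ k := by
  set s := √(b / a)
  have hs : 1 < s := Real.lt_sqrt_of_sq_lt (by rw [one_pow]; exact (one_lt_div ha).mpr hab)
  have hb : b = s ^ 2 * a := by rw [Real.sq_sqrt (div_pos (ha.trans hab) ha).le]; field_simp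
  have hσ : 0 < (s + 1) / (s - 1) := div_pos (by linarith) (by linarith)
  have hcosh : Real.cosh (Real.log ((s + 1) / (s - 1))) = (b + a) / (b - a) := by
    rw [Real.cosh_log hσ, inv_div, div_add_div _ _ (by linarith) (by linarith), div_div,
      div_eq_div_iff (by nlinarith) (by linarith), hb]
    ring
  have hT : ((s + 1) / (s - 1)) ^ k ≤ 2 * (Chebyshev.T ℝ k).eval ((b + a) / (b - a)) := by
    simpa [hcosh, Real.exp_nat_mul, Real.exp_log hσ] using
      Chebyshev.exp_le_two_mul_eval_T_cosh k (Real.log ((s + 1) / (s - 1)))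
  have hσk := pow_pos hσ k
  rw [← inv_div (s + 1) (s - 1), inv_pow, ← div_eq_mul_inv, le_div_iff₀ hσk,
    inv_mul_le_iff₀ (by linarith)]
  linarith

lemma exists_natDegree_le_eval_zero_eq_one_abs_eval_le_inv_eval_T {a b : ℝ} (ha : 0 ≤ a)
    (hab : a < b) (k : ℕ) : ∃ p : ℝ[X], p.natDegree ≤ k ∧ p.eval 0 = 1 ∧
      ∀ μ ∈ Set.Icc a b, |p.eval μ| ≤ ((Chebyshev.T ℝ k).eval ((b + a) / (b - a)))⁻¹ := by
  have hba : 0 < b - a := by linarith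
  set t := (Chebyshev.T ℝ k).eval ((b + a) / (b - a))
  have ht : 0 < t := one_pos.trans_le <| Chebyshev.one_le_eval_T_real k <|
    (one_le_div hba).mpr (by linarith)
  set ℓ : ℝ[X] := C ((b + a) / (b - a)) - C (2 / (b - a)) * X
  refine ⟨C t⁻¹ * (Chebyshev.T ℝ k).comp ℓ, ?_, ?_, fun μ hμ => ?_⟩
  · have hℓ : ℓ.natDegree ≤ 1 := by simp only [ℓ]; compute_degree
    calc (C t⁻¹ * (Chebyshev.T ℝ k).comp ℓ).natDegree
        ≤ ((Chebyshev.T ℝ k).comp ℓ).natDegree := natDegree_C_mul_le _ _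
      _ ≤ (Chebyshev.T ℝ k).natDegree * ℓ.natDegree := natDegree_comp_le
      _ ≤ k * 1 := Nat.mul_le_mul (by simp [Chebyshev.natDegree_T]) hℓ
      _ = k := mul_one k
  · simp only [ℓ, eval_mul, eval_C, eval_comp, eval_sub, eval_X, mul_zero, sub_zero]
    exact inv_mul_cancel₀ ht.ne'
  · have hℓμ : |ℓ.eval μ| ≤ 1 := by
      have : ℓ.eval μ = (b + a - 2 * μ) / (b - a) := by
        simp only [ℓ, eval_sub, eval_mul, eval_C, eval_X]
        ring
      rw [this, abs_le, le_div_iff₀ hba, div_le_one hba]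
      constructor <;> linarith [hμ.1, hμ.2]
    rw [eval_mul, eval_C, eval_comp, abs_mul, abs_inv, abs_of_pos ht]
    exact mul_le_of_le_one_right (inv_pos.mpr ht).le (Chebyshev.abs_eval_T_real_le_one k hℓμ)

lemma exists_natDegree_le_eval_zero_eq_one_abs_eval_le {a b : ℝ} (ha : 0 < a) (hab : a ≤ b)
    (k : ℕ) : ∃ p : ℝ[X], p.natDegree ≤ k ∧ p.eval 0 = 1 ∧
      ∀ μ ∈ Set.Icc a b, |p.eval μ| ≤ 2 * ((√(b / a) - 1) / (√(b / a) + 1)) ^ k := by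
  rcases hab.lt_or_eq with hab | rfl
  · obtain ⟨p, hdeg, hp0, hp⟩ :=
      exists_natDegree_le_eval_zero_eq_one_abs_eval_le_inv_eval_T ha.le hab k
    exact ⟨p, hdeg, hp0, fun μ hμ => (hp μ hμ).trans (Chebyshev.inv_eval_T_real_le ha hab k)⟩
  have hdeg : (1 - C a⁻¹ * X).natDegree ≤ 1 := by compute_degree
  refine ⟨(1 - C a⁻¹ * X) ^ k, (natDegree_pow_le_of_le k hdeg).trans_eq (mul_one k), by simp,
    fun μ hμ => ?_⟩
  obtain rfl : μ = a := le_antisymm hμ.2 hμ.1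
  cases k <;> simp [ha.ne']

structure IsCGSequence (A : Matrix ι ι ℝ) (f : ι → ℝ) (u r d : ℕ → ι → ℝ) (ω γ : ℕ → ℝ) :
    Prop where
  r_zero : r 0 = f - A *ᵥ u 0
  d_one : d 1 = r 0
  ω_succ : ∀ k, ω (k + 1) = (r k ⬝ᵥ r k) / (d (k + 1) ⬝ᵥ (A *ᵥ d (k + 1)))
  u_succ : ∀ k, u (k + 1) = u k + ω (k + 1) • d (k + 1)
  r_succ : ∀ k, r (k + 1) = r k - ω (k + 1) • (A *ᵥ d (k + 1))
  γ_succ : ∀ k, γ (k + 2) = (r (k + 1) ⬝ᵥ r (k + 1)) / (r k ⬝ᵥ r k)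
  d_succ : ∀ k, d (k + 2) = r (k + 1) + γ (k + 2) • d (k + 1)

namespace IsCGSequence

variable {A : Matrix ι ι ℝ} {f : ι → ℝ} {u r d : ℕ → ι → ℝ} {ω γ : ℕ → ℝ}
  (hcg : IsCGSequence A f u r d ω γ)
include hcg

lemma mulVec_sub_eq_r {xs : ι → ℝ} (hxs : A *ᵥ xs = f) (k : ℕ) : A *ᵥ (xs - u k) = r k := by
  induction k with
  | zero => rw [mulVec_sub, hxs, hcg.r_zero]
  | succ k ih =>
    rw [hcg.u_succ, hcg.r_succ, ← ih, mulVec_sub, mulVec_add, mulVec_smul, mulVec_sub]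
    abel

lemma r_eq_zero_of_le {j k : ℕ} (hj : r j = 0) (hjk : j ≤ k) : r k = 0 := by
  induction k, hjk using Nat.le_induction with
  | base => exact hj
  | succ k _ ih => rw [hcg.r_succ, hcg.ω_succ, ih]; simp

lemma d_succ_mem_span_r (k : ℕ) : d (k + 1) ∈ span ℝ (r '' Set.Iio (k + 1)) := by
  induction k with
  | zero => rw [hcg.d_one]; exact subset_span ⟨0, Nat.zero_lt_one, rfl⟩
  | succ k ih =>
    rw [hcg.d_succ]
    refine add_mem (subset_span ⟨k + 1, Nat.lt_succ_self _, rfl⟩) (smul_mem _ _ ?_)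
    exact span_mono (Set.image_mono (Set.Iio_subset_Iio (Nat.le_succ _))) ih

lemma r_sub_d_succ_mem_span_d (k : ℕ) :
    r k - d (k + 1) ∈ span ℝ ((fun i => d (i + 1)) '' Set.Iio k) := by
  cases k with
  | zero => rw [hcg.d_one, sub_self]; exact zero_mem _
  | succ k =>
    rw [hcg.d_succ, sub_add_cancel_left]
    exact neg_mem (smul_mem _ _ (subset_span ⟨k, Nat.lt_succ_self k, rfl⟩))

lemma span_d_eq_span_r (k : ℕ) :
    span ℝ ((fun i => d (i + 1)) '' Set.Iio k) = span ℝ (r '' Set.Iio k) := by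
  apply le_antisymm <;> refine span_le.mpr ?_ <;> rintro _ ⟨i, hi, rfl⟩
  · exact span_mono (Set.image_mono (Set.Iio_subset_Iio hi)) (hcg.d_succ_mem_span_r i)
  · rw [← sub_add_cancel (r i) (d (i + 1))]
    exact add_mem (span_mono (Set.image_mono (Set.Iio_subset_Iio (le_of_lt hi)))
      (hcg.r_sub_d_succ_mem_span_d i)) (subset_span ⟨i, hi, rfl⟩)

lemma u_sub_mem_span_d (k : ℕ) : u k - u 0 ∈ span ℝ ((fun i => d (i + 1)) '' Set.Iio k) := by
  induction k with
  | zero => rw [sub_self]; exact zero_mem _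
  | succ k ih =>
    rw [hcg.u_succ, add_sub_right_comm]
    exact add_mem (span_mono (Set.image_mono (Set.Iio_subset_Iio (Nat.le_succ k))) ih)
      (smul_mem _ _ (subset_span ⟨k, Nat.lt_succ_self k, rfl⟩))

lemma r_dotProduct_d_succ {k : ℕ} (hr : ∀ i < k, r k ⬝ᵥ r i = 0) :
    r k ⬝ᵥ d (k + 1) = r k ⬝ᵥ r k := by
  have h : r k ⬝ᵥ (r k - d (k + 1)) = 0 := by
    refine dotProduct_eq_zero_of_mem_span (S := r '' Set.Iio k) ?_ ?_
    · rintro _ ⟨i, hi, rfl⟩; exact hr i hi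
    · rw [← hcg.span_d_eq_span_r]; exact hcg.r_sub_d_succ_mem_span_d k
  rw [dotProduct_sub, sub_eq_zero] at h
  exact h.symm

lemma ω_succ_mul {k : ℕ} (hA : A.PosDef) (hr : ∀ i < k, r k ⬝ᵥ r i = 0) :
    ω (k + 1) * (d (k + 1) ⬝ᵥ (A *ᵥ d (k + 1))) = r k ⬝ᵥ r k := by
  by_cases hd : d (k + 1) = 0
  · rw [← hcg.r_dotProduct_d_succ hr, hd]; simp
  · rw [hcg.ω_succ, div_mul_cancel₀ _ (by simpa using (hA.dotProduct_mulVec_pos hd).ne')]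

lemma ω_succ_ne_zero {k : ℕ} (hA : A.PosDef) (hr : ∀ i < k, r k ⬝ᵥ r i = 0) (hrk : r k ≠ 0) :
    ω (k + 1) ≠ 0 := by
  intro hω
  have h := hcg.ω_succ_mul hA hr
  rw [hω, zero_mul, eq_comm, dotProduct_self_eq_zero] at h
  exact hrk h

lemma mulVec_d_succ {k : ℕ} (hω : ω (k + 1) ≠ 0) :
    A *ᵥ d (k + 1) = (ω (k + 1))⁻¹ • (r k - r (k + 1)) := by
  rw [hcg.r_succ, sub_sub_cancel, smul_smul, inv_mul_cancel₀ hω, one_smul]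

lemma r_succ_orthogonal {k : ℕ} (hA : A.PosDef) (hr : ∀ i < k, r k ⬝ᵥ r i = 0)
    (hd : ∀ i < k, d (k + 1) ⬝ᵥ (A *ᵥ d (i + 1)) = 0) :
    ∀ i < k + 1, r (k + 1) ⬝ᵥ r i = 0 := by
  intro i hi
  have hri : d (k + 1) ⬝ᵥ (A *ᵥ r i) = d (k + 1) ⬝ᵥ (A *ᵥ d (i + 1)) := by
    have hmem := span_mono (Set.image_mono (Set.Iio_subset_Iio (Nat.lt_succ_iff.mp hi)))
      (hcg.r_sub_d_succ_mem_span_d i)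
    rw [← sub_add_cancel (r i) (d (i + 1)), mulVec_add, dotProduct_add,
      dotProduct_mulVec_eq_zero_of_mem_span (Set.forall_mem_image.mpr hd) hmem, zero_add]
  rw [hcg.r_succ, sub_dotProduct, smul_dotProduct, dotProduct_comm (A *ᵥ _),
    (isHermitian_iff_isSymm.mp hA.1).dotProduct_mulVec_comm, hri, smul_eq_mul]
  rcases (Nat.lt_succ_iff.mp hi).lt_or_eq with hik | rfl
  · rw [hr i hik, hd i hik, mul_zero, sub_zero]
  · rw [hcg.ω_succ_mul hA hr, sub_self]

lemma d_succ_conjugate {k : ℕ} (hA : A.PosDef) (hr : ∀ i < k, r k ⬝ᵥ r i = 0)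
    (hr_succ : ∀ i < k + 1, r (k + 1) ⬝ᵥ r i = 0)
    (hd : ∀ i < k, d (k + 1) ⬝ᵥ (A *ᵥ d (i + 1)) = 0) (hω : ∀ i < k + 1, ω (i + 1) ≠ 0) :
    ∀ i < k + 1, d (k + 2) ⬝ᵥ (A *ᵥ d (i + 1)) = 0 := by
  intro i hi
  have hrd : r (k + 1) ⬝ᵥ (A *ᵥ d (i + 1)) =
      (ω (i + 1))⁻¹ * (r (k + 1) ⬝ᵥ r i - r (k + 1) ⬝ᵥ r (i + 1)) := by
    rw [hcg.mulVec_d_succ (hω i hi), dotProduct_smul, dotProduct_sub, smul_eq_mul]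
  rw [hcg.d_succ, add_dotProduct, smul_dotProduct, hrd, hr_succ i hi, smul_eq_mul]
  rcases (Nat.lt_succ_iff.mp hi).lt_or_eq with hik | rfl
  · rw [hr_succ (i + 1) (by omega), hd i hik]; ring
  · have hri : r i ⬝ᵥ r i ≠ 0 := fun h => hω i hi (by rw [hcg.ω_succ, h, zero_div])
    have hωd := hcg.ω_succ_mul hA hr
    have hdAd : d (i + 1) ⬝ᵥ (A *ᵥ d (i + 1)) ≠ 0 := right_ne_zero_of_mul (hωd ▸ hri)
    rw [hcg.γ_succ, ← hωd]
    field_simp [hω i hi]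
    ring

lemma orthogonal_and_conjugate {k : ℕ} (hA : A.PosDef) (hnd : ∀ j < k, r j ≠ 0) :
    ∀ j ≤ k, (∀ i < j, r j ⬝ᵥ r i = 0) ∧ (∀ i < j, d (j + 1) ⬝ᵥ (A *ᵥ d (i + 1)) = 0) := by
  induction k with
  | zero => intro j hj; obtain rfl := Nat.le_zero.mp hj; simp
  | succ k ih =>
    have ih := ih fun j hj => hnd j (by omega)
    intro j hj
    rcases hj.lt_or_eq with hj | rfl
    · exact ih j (Nat.lt_succ_iff.mp hj)
    obtain ⟨hr, hd⟩ := ih k le_rfl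
    have hr_succ := hcg.r_succ_orthogonal hA hr hd
    refine ⟨hr_succ, hcg.d_succ_conjugate hA hr hr_succ hd fun i hi => ?_⟩
    exact hcg.ω_succ_ne_zero hA (ih i (by omega)).1 (hnd i hi)

lemma r_dotProduct_eq_zero_of_mem_span {k : ℕ} (hA : A.PosDef) (hnd : ∀ j < k, r j ≠ 0)
    {w : ι → ℝ} (hw : w ∈ span ℝ (r '' Set.Iio k)) : r k ⬝ᵥ w = 0 :=
  dotProduct_eq_zero_of_mem_span
    (Set.forall_mem_image.mpr (hcg.orthogonal_and_conjugate hA hnd k le_rfl).1) hw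

lemma mulVec_mem_span_r {k : ℕ} (hA : A.PosDef) (hnd : ∀ j < k, r j ≠ 0) {w : ι → ℝ}
    (hw : w ∈ span ℝ (r '' Set.Iio k)) : A *ᵥ w ∈ span ℝ (r '' Set.Iio (k + 1)) := by
  rw [← hcg.span_d_eq_span_r] at hw
  refine (span_le (p := (span ℝ (r '' Set.Iio (k + 1))).comap A.mulVecLin)).mpr ?_ hw
  rintro _ ⟨i, hi, rfl⟩
  have hω := hcg.ω_succ_ne_zero hA (hcg.orthogonal_and_conjugate hA hnd i (le_of_lt hi)).1
    (hnd i hi)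
  rw [SetLike.mem_coe, mem_comap, mulVecLin_apply, hcg.mulVec_d_succ hω]
  exact smul_mem _ _ (sub_mem (subset_span ⟨i, Nat.lt_succ_of_lt hi, rfl⟩)
    (subset_span ⟨i + 1, Nat.succ_lt_succ hi, rfl⟩))

lemma krylov_le_span_r [DecidableEq ι] {k : ℕ} (hA : A.PosDef) (hnd : ∀ j < k, r j ≠ 0) :
    A.krylov (r 0) k ≤ span ℝ (r '' Set.Iio k) := by
  induction k with
  | zero => simp [krylov]
  | succ k ih =>
    have hnd' : ∀ j < k, r j ≠ 0 := fun j hj => hnd j (Nat.lt_succ_of_lt hj)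
    refine span_le.mpr ?_
    rintro _ ⟨i, hi, rfl⟩
    cases i with
    | zero => exact subset_span ⟨0, hi, by simp⟩
    | succ i =>
      rw [Set.mem_Iio, Nat.succ_lt_succ_iff] at hi
      dsimp only
      rw [pow_succ', ← mulVec_mulVec]
      exact hcg.mulVec_mem_span_r hA hnd' (ih hnd' (subset_span ⟨i, hi, rfl⟩))

lemma error_le_aeval [DecidableEq ι] (hA : A.PosDef) {xs : ι → ℝ} (hxs : A *ᵥ xs = f) {k : ℕ}
    {p : ℝ[X]} (hdeg : p.natDegree ≤ k) (hp0 : p.eval 0 = 1) :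
    (u k - xs) ⬝ᵥ (A *ᵥ (u k - xs)) ≤
      (aeval A p *ᵥ (u 0 - xs)) ⬝ᵥ (A *ᵥ (aeval A p *ᵥ (u 0 - xs))) := by
  have hAe : A *ᵥ (u k - xs) = -r k := by rw [← hcg.mulVec_sub_eq_r hxs, ← mulVec_neg, neg_sub]
  rcases em (∃ j < k, r j = 0) with ⟨j, hjk, hj⟩ | hnd
  · rw [hAe, hcg.r_eq_zero_of_le hj hjk.le, neg_zero, dotProduct_zero]
    simpa using hA.posSemidef.dotProduct_mulVec_nonneg (aeval A p *ᵥ (u 0 - xs))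
  replace hnd : ∀ j < k, r j ≠ 0 := fun j hjk hj => hnd ⟨j, hjk, hj⟩
  have hK := A.aeval_mulVec_sub_mem_krylov hdeg hp0 (xs - u 0)
  rw [hcg.mulVec_sub_eq_r hxs] at hK
  have hU := hcg.u_sub_mem_span_d k
  rw [hcg.span_d_eq_span_r] at hU
  have hmem : aeval A p *ᵥ (u 0 - xs) - (u k - xs) ∈ span ℝ (r '' Set.Iio k) := by
    convert sub_mem (neg_mem (hcg.krylov_le_span_r hA hnd hK)) hU using 1
    rw [← neg_sub xs (u 0), mulVec_neg]
    abel
  refine hA.posSemidef.dotProduct_mulVec_le_of_sub_dotProduct_mulVec_eq_zero ?_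
  rw [hAe, dotProduct_neg, dotProduct_comm, hcg.r_dotProduct_eq_zero_of_mem_span hA hnd hmem,
    neg_zero]

end IsCGSequence

/-- classical convergence estimate for the conjugate gradient method:
for `A` symmetric positive definite, the CG iterates satisfy
`‖u_k - u‖_A ≤ 2 ((√κ - 1)/(√κ + 1))^k ‖u_0 - u‖_A`, where
`κ = λ_max(A)/λ_min(A)`. The iterates are described by the standard recurrences. -/
theorem conjugate_gradient_convergence
    (N : ℕ) (hN : 0 < N)
    (A : Matrix (Fin N) (Fin N) ℝ) (hA : A.PosDef)
    (f xs : Fin N → ℝ) (hxs : A *ᵥ xs = f)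
    (u r dv : ℕ → Fin N → ℝ) (ω γ : ℕ → ℝ)
    (hr0 : r 0 = f - A *ᵥ u 0)
    (hd1 : dv 1 = r 0)
    (hω : ∀ k, 1 ≤ k → ω k = (r (k - 1) ⬝ᵥ r (k - 1)) / (dv k ⬝ᵥ (A *ᵥ dv k)))
    (hu : ∀ k, 1 ≤ k → u k = u (k - 1) + ω k • dv k)
    (hrk : ∀ k, 1 ≤ k → r k = r (k - 1) - ω k • (A *ᵥ dv k))
    (hγ : ∀ k, 2 ≤ k → γ k = (r (k - 1) ⬝ᵥ r (k - 1)) / (r (k - 2) ⬝ᵥ r (k - 2)))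
    (hd : ∀ k, 2 ≤ k → dv k = r (k - 1) + γ k • dv (k - 1))
    (κ : ℝ)
    (hκ : κ = (Finset.univ.sup' ⟨⟨0, hN⟩, Finset.mem_univ _⟩ hA.1.eigenvalues) /
      (Finset.univ.inf' ⟨⟨0, hN⟩, Finset.mem_univ _⟩ hA.1.eigenvalues)) :
    ∀ k : ℕ, Real.sqrt ((u k - xs) ⬝ᵥ (A *ᵥ (u k - xs))) ≤
      2 * ((Real.sqrt κ - 1) / (Real.sqrt κ + 1)) ^ k *
        Real.sqrt ((u 0 - xs) ⬝ᵥ (A *ᵥ (u 0 - xs))) := by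
  intro k
  have hcg : IsCGSequence A f u r dv ω γ :=
    { r_zero := hr0
      d_one := hd1
      ω_succ := fun k => by simpa using hω (k + 1) (by omega)
      u_succ := fun k => by simpa using hu (k + 1) (by omega)
      r_succ := fun k => by simpa using hrk (k + 1) (by omega)
      γ_succ := fun k => by simpa using hγ (k + 2) (by omega)
      d_succ := fun k => by simpa using hd (k + 2) (by omega) }
  set a := Finset.univ.inf' ⟨⟨0, hN⟩, Finset.mem_univ _⟩ hA.1.eigenvalues
  set b := Finset.univ.sup' ⟨⟨0, hN⟩, Finset.mem_univ _⟩ hA.1.eigenvalues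
  have hmem : ∀ i, hA.1.eigenvalues i ∈ Set.Icc a b :=
    fun i => ⟨Finset.inf'_le _ (Finset.mem_univ i), Finset.le_sup' _ (Finset.mem_univ i)⟩
  have ha : 0 < a := by
    obtain ⟨i, -, hi⟩ := Finset.exists_mem_eq_inf' ⟨⟨0, hN⟩, Finset.mem_univ _⟩ hA.1.eigenvalues
    rw [show a = _ from hi]
    exact hA.eigenvalues_pos i
  obtain ⟨p, hdeg, hp0, hp⟩ := exists_natDegree_le_eval_zero_eq_one_abs_eval_le ha
    ((hmem ⟨0, hN⟩).1.trans (hmem ⟨0, hN⟩).2) k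
  rw [← hκ] at hp
  set M := 2 * ((√κ - 1) / (√κ + 1)) ^ k
  have hM0 : 0 ≤ M := (abs_nonneg _).trans (hp _ (hmem ⟨0, hN⟩))
  calc √((u k - xs) ⬝ᵥ (A *ᵥ (u k - xs)))
      ≤ √(M ^ 2 * ((u 0 - xs) ⬝ᵥ (A *ᵥ (u 0 - xs)))) := Real.sqrt_le_sqrt <|
        (hcg.error_le_aeval hA hxs hdeg hp0).trans
          (hA.posSemidef.dotProduct_mulVec_aeval_le p (fun i => hp _ (hmem i)) _)
    _ = M * √((u 0 - xs) ⬝ᵥ (A *ᵥ (u 0 - xs))) := by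
        rw [Real.sqrt_mul (sq_nonneg M), Real.sqrt_sq hM0]
end
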